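/- For every n ≥ 1 and every n-formula φ of L_□, the following are equivalent: (i) φ is valid in every model (W,V) whose variable assignment satisfies the Con, Ground, and Min constraints; (ii) S5[Con,Ground,Min_n] ⊢ φ. -/

import Mathlib

namespace KripkeModal

/-- Formulas of the modal language `L_□`: atoms `T(x)`, `F(x)` for variables
`x : ℕ`, negation, conjunction, and box. -/
inductive Fml : Type
  | tt : ℕ → Fml   -- T(x)
  | ff : ℕ → Fml   -- F(x)
  | neg : Fml → Fml
  | and : Fml → Fml → Fml
  | box : Fml → Fml
deriving DecidableEq

namespace Fml

/-- Material implication, defined from `¬, ∧`. -/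
def imp (φ ψ : Fml) : Fml := neg (and φ (neg ψ))

/-- Disjunction, defined from `¬, ∧`. -/
def or (φ ψ : Fml) : Fml := neg (and (neg φ) (neg ψ))

/-- Biconditional. -/
def iff (φ ψ : Fml) : Fml := and (imp φ ψ) (imp ψ φ)

/-- Diamond: `◇φ := ¬□¬φ`. -/
def dia (φ : Fml) : Fml := neg (box (neg φ))

/-- `N(x) := ¬T(x) ∧ ¬F(x)`. -/
def Nf (x : ℕ) : Fml := and (neg (tt x)) (neg (ff x))

/-- A fixed contradiction. -/
def bot : Fml := and (tt 0) (neg (tt 0))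

end Fml

open Fml

/-- Evaluate a formula propositionally under a valuation `v` of the "atoms":
the atomic formulas `T(x)`, `F(x)` and all boxed formulas are treated as
propositional atoms. -/
def evalProp (v : Fml → Bool) : Fml → Bool
  | Fml.neg φ => !(evalProp v φ)
  | Fml.and φ ψ => evalProp v φ && evalProp v ψ
  | φ => v φ

/-- A formula is a substitution instance of a classical propositional tautology
iff it evaluates to true under every propositional valuation of its atoms. -/
def Tautology (φ : Fml) : Prop := ∀ v : Fml → Bool, evalProp v φ = true

/-- Provability in the modal system `S5[Ax]`: the smallest set of formulas
containing all substitution instances of propositional tautologies, all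
instances of K, T and 5, all formulas in `Ax`, closed under modus ponens and
necessitation.  Taking `Ax = ∅` gives `S5` itself. -/
inductive Prv (Ax : Set Fml) : Fml → Prop
  | taut {φ} : Tautology φ → Prv Ax φ
  | axK (A B : Fml) : Prv Ax (imp (box (imp A B)) (imp (box A) (box B)))
  | axT (A : Fml) : Prv Ax (imp (box A) A)
  | ax5 (A : Fml) : Prv Ax (imp (dia A) (box (dia A)))
  | axm {φ} : φ ∈ Ax → Prv Ax φ
  | mp {A B} : Prv Ax (imp A B) → Prv Ax A → Prv Ax B
  | nec {A} : Prv Ax A → Prv Ax (box A)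

/-- A system is consistent if it does not prove a contradiction. -/
def Consistent (Ax : Set Fml) : Prop := ¬ Prv Ax Fml.bot

/-- The axiom schema `Con`: `¬(T(x) ∧ F(x))`. -/
def ConAx : Set Fml := { φ | ∃ x : ℕ, φ = neg (and (tt x) (ff x)) }

/-- The axiom schema `Ground`: `(◇T(x) ∧ ◇F(x)) → ◇N(x)`. -/
def GroundAx : Set Fml :=
  { φ | ∃ x : ℕ, φ = imp (and (dia (tt x)) (dia (ff x))) (dia (Nf x)) }

/-- Conjunction of a list of formulas (empty conjunction is `¬⊥`). -/
def bigAnd : List Fml → Fml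
  | [] => Fml.neg Fml.bot
  | [φ] => φ
  | φ :: ψ :: rest => Fml.and φ (bigAnd (ψ :: rest))

/-- Disjunction of a list of formulas (the empty disjunction is the fixed
contradiction `⊥`). -/
def bigOr : List Fml → Fml
  | [] => Fml.bot
  | [φ] => φ
  | φ :: ψ :: rest => Fml.or φ (bigOr (ψ :: rest))

/-- The axiom schema `Min_n`: all instances
`(◇N(x_1) ∧ … ∧ ◇N(x_n)) → ◇(N(x_1) ∧ … ∧ N(x_n))` obtained by substituting
arbitrary (not necessarily distinct) variables for `x_1, …, x_n`. -/
def MinAx (n : ℕ) : Set Fml :=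
  { φ | ∃ l : List ℕ, l.length = n ∧
      φ = imp (bigAnd (l.map (fun x => dia (Nf x)))) (dia (bigAnd (l.map Nf))) }

/-- A formula is extensional if it contains no `□`. -/
def Extensional : Fml → Prop
  | tt _ => True
  | ff _ => True
  | Fml.neg φ => Extensional φ
  | Fml.and φ ψ => Extensional φ ∧ Extensional ψ
  | box _ => False

/-- A formula is intensional if every atomic subformula occurs within the
scope of a `□`. -/
def Intensional : Fml → Prop
  | tt _ => False
  | ff _ => False
  | Fml.neg φ => Intensional φ
  | Fml.and φ ψ => Intensional φ ∧ Intensional ψ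
  | box _ => True

/-- The set of variables occurring in a formula. -/
def vars : Fml → Set ℕ
  | tt x => {x}
  | ff x => {x}
  | Fml.neg φ => vars φ
  | Fml.and φ ψ => vars φ ∪ vars ψ
  | box φ => vars φ

/-- An `n`-formula: one whose atoms use only the variables `x_1, …, x_n`. -/
def IsNFormula (n : ℕ) (φ : Fml) : Prop := vars φ ⊆ {x | 1 ≤ x ∧ x ≤ n}

/-- A 1-formula: one whose atoms use only the single variable `x_1`. -/
abbrev Is1Formula (φ : Fml) : Prop := IsNFormula 1 φ

/-- `φ` is `Γ`-maximal for the system `S5[Ax]`. -/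
def GammaMaximal (Ax : Set Fml) (Γ : Set Fml) (φ : Fml) : Prop :=
  Consistent (Ax ∪ {φ}) ∧ φ ∈ Γ ∧
    ∀ ψ ∈ Γ, Prv Ax (imp φ ψ) ∨ Prv Ax (imp φ (neg ψ))

/-- Extensional `n`-isolators for `S5[Ax]`. -/
def ExtIsolator (n : ℕ) (Ax : Set Fml) (φ : Fml) : Prop :=
  GammaMaximal Ax {ψ | Extensional ψ ∧ IsNFormula n ψ} φ

/-- Intensional `n`-isolators for `S5[Ax]`. -/
def IntIsolator (n : ℕ) (Ax : Set Fml) (φ : Fml) : Prop :=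
  GammaMaximal Ax {ψ | Intensional ψ ∧ IsNFormula n ψ} φ

/-- An `n`-isolator for `S5[Ax]`: a consistent conjunction `ε ∧ ι` of an
extensional `n`-isolator and an intensional `n`-isolator. -/
def Isolator (n : ℕ) (Ax : Set Fml) (φ : Fml) : Prop :=
  ∃ ε ι, ExtIsolator n Ax ε ∧ IntIsolator n Ax ι ∧
    φ = Fml.and ε ι ∧ Consistent (Ax ∪ {φ})

/-- Satisfaction in a model `(W, V)` (with `V = (V1, V2)`) at a world `w`. -/
def Sat {W : Type*} (V1 V2 : ℕ → Set W) : W → Fml → Prop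
  | w, tt x => w ∈ V1 x
  | w, ff x => w ∈ V2 x
  | w, Fml.neg φ => ¬ Sat V1 V2 w φ
  | w, Fml.and φ ψ => Sat V1 V2 w φ ∧ Sat V1 V2 w ψ
  | _, box φ => ∀ v, Sat V1 V2 v φ

/-- The variable assignment satisfies the `Con` constraint. -/
def ConC {W : Type*} (V1 V2 : ℕ → Set W) : Prop := ∀ x, V1 x ∩ V2 x = ∅

/-- The variable assignment satisfies the `Ground` constraint. -/
def GroundC {W : Type*} (V1 V2 : ℕ → Set W) : Prop :=
  ∀ x, (V1 x).Nonempty → (V2 x).Nonempty → ((V1 x ∪ V2 x)ᶜ : Set W).Nonempty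

/-- The variable assignment satisfies the `Min` constraint. -/
def MinC {W : Type*} (V1 V2 : ℕ → Set W) : Prop :=
  ∀ l : List ℕ, l ≠ [] → (∀ x ∈ l, ((V1 x ∪ V2 x)ᶜ : Set W).Nonempty) →
    (⋂ x ∈ l, ((V1 x ∪ V2 x)ᶜ : Set W)).Nonempty

/-- The prime conditions for a subset `S` of the tensor `[3]^n`, realized as
`Fin n → Fin 3` where the value `0` stands for the layer `T`, `1` for `F`,
and `2` for `N` (i.e. `1, 2, 3` in the paper's numbering). -/
def PrimeConditions (n : ℕ) (S : Set (Fin n → Fin 3)) : Prop :=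
  S.Nonempty ∧
  (∀ j : Fin n, (S ∩ {a | a j = 0}).Nonempty → (S ∩ {a | a j = 1}).Nonempty →
      (S ∩ {a | a j = 2}).Nonempty) ∧
  ∀ J : Set (Fin n), J.Nonempty →
    (∀ j ∈ J, (S ∩ {a | a j = 2}).Nonempty) →
    (S ∩ ⋂ j ∈ J, {a | a j = 2}).Nonempty

/-- `χ_1 = T`, `χ_2 = F`, `χ_3 = N` (with `Fin 3` values `0, 1, 2`). -/
def chi (k : Fin 3) (x : ℕ) : Fml :=
  if k = 0 then tt x else if k = 1 then ff x else Nf x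

/-- The extensional `n`-isolator `φ_a = χ_{a_1}(x_1) ∧ … ∧ χ_{a_n}(x_n)`
associated with a tuple `a ∈ [3]^n`. -/
def tupleFml {n : ℕ} (a : Fin n → Fin 3) : Fml :=
  bigAnd ((List.finRange n).map (fun i => chi (a i) (i.1 + 1)))

open Classical in
/-- The pre-`n`-isolator of `S ⊆ [3]^n`:
`⋀_{a ∈ S} ◇φ_a ∧ ⋀_{a ∉ S} ¬◇φ_a`. -/
noncomputable def preIsolator (n : ℕ) (S : Set (Fin n → Fin 3)) : Fml :=
  bigAnd (((Finset.univ : Finset (Fin n → Fin 3)).toList).map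
    (fun a => if a ∈ S then dia (tupleFml a) else Fml.neg (dia (tupleFml a))))

/-!
Soundness is an induction on derivations: `Con`, `Ground` and `Min_n` are valid under the
corresponding constraints, an instance of `Min_n` with repeated variables being an instance of
`Min`.

Completeness goes through a canonical model. If `φ` is unprovable, extend `{¬φ}` to a maximal
consistent set `Γ₀`; the worlds are the maximal consistent sets with the same boxed formulas as
`Γ₀`, and `T(x)`, `F(x)` are read off membership for `1 ≤ x ≤ n` and are false elsewhere. The
truth lemma then holds for `n`-formulas, `Con` and `Ground` in `Γ₀` yield the `Con` and `Ground`
constraints, and since only `x_1, …, x_n` can fail to be `N`, the `Min` constraint for any list of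
variables reduces to an instance of `Min_n`, after padding the relevant variables to length `n`.
-/

section Semantics

variable {W : Type*} {V1 V2 : ℕ → Set W} {w : W} {A B : Fml}

@[simp] lemma sat_tt (x : ℕ) : Sat V1 V2 w (tt x) ↔ w ∈ V1 x := Iff.rfl

@[simp] lemma sat_ff (x : ℕ) : Sat V1 V2 w (ff x) ↔ w ∈ V2 x := Iff.rfl

@[simp] lemma sat_neg : Sat V1 V2 w (neg A) ↔ ¬ Sat V1 V2 w A := Iff.rfl

@[simp] lemma sat_and : Sat V1 V2 w (Fml.and A B) ↔ Sat V1 V2 w A ∧ Sat V1 V2 w B := Iff.rfl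

@[simp] lemma sat_box : Sat V1 V2 w (box A) ↔ ∀ v, Sat V1 V2 v A := Iff.rfl

@[simp] lemma sat_imp : Sat V1 V2 w (imp A B) ↔ (Sat V1 V2 w A → Sat V1 V2 w B) := by
  simp [Fml.imp]

@[simp] lemma sat_dia : Sat V1 V2 w (dia A) ↔ ∃ v, Sat V1 V2 v A := by
  simp [Fml.dia]

@[simp] lemma sat_Nf (x : ℕ) : Sat V1 V2 w (Nf x) ↔ w ∈ (V1 x ∪ V2 x)ᶜ := by
  simp [Fml.Nf]

@[simp] lemma sat_bigAnd (l : List Fml) : Sat V1 V2 w (bigAnd l) ↔ ∀ ψ ∈ l, Sat V1 V2 w ψ := by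
  induction l using bigAnd.induct <;> simp_all [bigAnd, Fml.bot]

lemma sat_of_tautology (h : Tautology A) : Sat V1 V2 w A := by
  classical
  have key : ∀ ψ, evalProp (fun χ => decide (Sat V1 V2 w χ)) ψ = decide (Sat V1 V2 w ψ) := by
    intro ψ
    induction ψ with
    | neg φ ih => simp [evalProp, ih]
    | and φ ψ ih₁ ih₂ => simp [evalProp, ih₁, ih₂]
    | _ => rfl
  simpa [key] using h fun χ => decide (Sat V1 V2 w χ)

theorem Prv.sound {Ax : Set Fml} (hAx : ∀ ψ ∈ Ax, ∀ w, Sat V1 V2 w ψ) (h : Prv Ax A) :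
    ∀ w, Sat V1 V2 w A := by
  induction h with
  | taut h => exact fun _ => sat_of_tautology h
  | axK => simp_all
  | axT => simp_all
  | ax5 => simp_all
  | axm h => exact hAx _ h
  | mp _ _ ih₁ ih₂ => exact fun w => (sat_imp.1 (ih₁ w)) (ih₂ w)
  | nec _ ih => exact fun _ => ih

lemma ConC.sat_of_mem_conAx (hC : ConC V1 V2) : ∀ ψ ∈ ConAx, ∀ w, Sat V1 V2 w ψ := by
  rintro _ ⟨x, rfl⟩ w ⟨h₁, h₂⟩
  simpa [hC x] using Set.mem_inter h₁ h₂

lemma GroundC.sat_of_mem_groundAx (hG : GroundC V1 V2) :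
    ∀ ψ ∈ GroundAx, ∀ w, Sat V1 V2 w ψ := by
  rintro _ ⟨x, rfl⟩ w
  simpa [Set.nonempty_def] using hG x

-- The empty instance `⊤ → ◇⊤` is witnessed by the world of evaluation itself.
lemma MinC.sat_of_mem_minAx {n : ℕ} (hM : MinC V1 V2) :
    ∀ ψ ∈ MinAx n, ∀ w, Sat V1 V2 w ψ := by
  rintro _ ⟨l, -, rfl⟩ w
  rcases eq_or_ne l [] with rfl | hl
  · simpa using ⟨w⟩
  · simpa [Set.nonempty_def] using hM l hl

end Semantics

section Propositional

variable {Ax : Set Fml} {A B C : Fml} {v : Fml → Bool}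

@[simp] lemma evalProp_neg : evalProp v (neg A) = true ↔ ¬ evalProp v A = true := by
  simp [evalProp]

@[simp] lemma evalProp_and :
    evalProp v (Fml.and A B) = true ↔ evalProp v A = true ∧ evalProp v B = true := by
  simp [evalProp]

@[simp] lemma evalProp_imp :
    evalProp v (imp A B) = true ↔ (evalProp v A = true → evalProp v B = true) := by
  simp only [Fml.imp, evalProp_neg, evalProp_and]; tauto

@[simp] lemma evalProp_bot : ¬ evalProp v bot = true := by
  simp only [Fml.bot, evalProp_and, evalProp_neg]; tauto

@[simp] lemma evalProp_bigAnd (l : List Fml) :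
    evalProp v (bigAnd l) = true ↔ ∀ ψ ∈ l, evalProp v ψ = true := by
  induction l using bigAnd.induct <;> simp_all [bigAnd]

lemma Prv.imp_of_entails (h : ∀ v, evalProp v A = true → evalProp v B = true) :
    Prv Ax (imp A B) :=
  Prv.taut fun v => evalProp_imp.2 (h v)

lemma Prv.of_entails (h : ∀ v, evalProp v A = true → evalProp v B = true) (hA : Prv Ax A) :
    Prv Ax B :=
  Prv.mp (Prv.imp_of_entails h) hA

lemma Prv.of_entails₂
    (h : ∀ v, evalProp v A = true → evalProp v B = true → evalProp v C = true)
    (hA : Prv Ax A) (hB : Prv Ax B) : Prv Ax C :=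
  Prv.mp (Prv.of_entails (B := imp B C) (fun v hA => evalProp_imp.2 (h v hA)) hA) hB

lemma Prv.imp_trans (h₁ : Prv Ax (imp A B)) (h₂ : Prv Ax (imp B C)) : Prv Ax (imp A C) :=
  Prv.of_entails₂ (fun _ h₁ h₂ => by simp_all) h₁ h₂

lemma Prv.neg_imp_neg (h : Prv Ax (imp A B)) : Prv Ax (imp (neg B) (neg A)) :=
  Prv.of_entails (fun _ h => by simp only [evalProp_imp, evalProp_neg] at h ⊢; tauto) h

lemma Prv.bigAnd_imp_bigAnd {l₁ l₂ : List Fml} (h : l₂ ⊆ l₁) :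
    Prv Ax (imp (bigAnd l₁) (bigAnd l₂)) :=
  Prv.imp_of_entails fun _ h₁ => by simp_all [List.subset_def]

end Propositional

section Modal

variable {Ax : Set Fml} {A B : Fml}

lemma Prv.box_mono (h : Prv Ax (imp A B)) : Prv Ax (imp (box A) (box B)) :=
  Prv.mp (Prv.axK A B) (Prv.nec h)

lemma Prv.dia_mono (h : Prv Ax (imp A B)) : Prv Ax (imp (dia A) (dia B)) :=
  (Prv.box_mono h.neg_imp_neg).neg_imp_neg

lemma Prv.imp_dia (A : Fml) : Prv Ax (imp A (dia A)) :=
  Prv.imp_trans (Prv.imp_of_entails fun _ h => by simpa using h) (Prv.axT (neg A)).neg_imp_neg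

lemma Prv.neg_box_imp_box_neg_box (A : Fml) : Prv Ax (imp (neg (box A)) (box (neg (box A)))) :=
  have dne : Prv Ax (imp (box (neg (neg A))) (box A)) :=
    Prv.box_mono (Prv.imp_of_entails fun _ h => by simpa using h)
  have dni : Prv Ax (imp (box A) (box (neg (neg A)))) :=
    Prv.box_mono (Prv.imp_of_entails fun _ h => by simpa using h)
  (dne.neg_imp_neg.imp_trans (Prv.ax5 (neg A))).imp_trans (Prv.box_mono dni.neg_imp_neg)

lemma Prv.ax4 (A : Fml) : Prv Ax (imp (box A) (box (box A))) :=
  have dia_box : Prv Ax (imp (dia (box A)) (box A)) :=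
    (Prv.neg_box_imp_box_neg_box A).neg_imp_neg.imp_trans
      (Prv.imp_of_entails fun _ h => by simpa using h)
  ((Prv.imp_dia _).imp_trans (Prv.ax5 _)).imp_trans (Prv.box_mono dia_box)

lemma Prv.bigAnd_box_imp_box_bigAnd (l : List Fml) :
    Prv Ax (imp (bigAnd (l.map box)) (box (bigAnd l))) := by
  induction l with
  | nil =>
    exact Prv.of_entails (fun _ h => evalProp_imp.2 fun _ => h)
      (Prv.nec (Prv.taut fun _ => by simp))
  | cons φ l ih =>
    have hK : Prv Ax (imp (box φ) (imp (box (bigAnd l)) (box (bigAnd (φ :: l))))) :=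
      (Prv.box_mono (Prv.imp_of_entails fun _ h₁ => by simp_all)).imp_trans (Prv.axK _ _)
    refine Prv.of_entails₂ (fun _ h₁ h₂ => ?_) hK ih
    simp only [evalProp_imp, evalProp_bigAnd, List.map_cons, List.forall_mem_cons] at *
    exact fun h => h₁ h.1 (h₂ h.2)

end Modal

def ConsistentSet (Ax Γ : Set Fml) : Prop :=
  ∀ l : List Fml, (∀ χ ∈ l, χ ∈ Γ) → ¬ Prv Ax (neg (bigAnd l))

def MaximalConsistent (Ax Γ : Set Fml) : Prop :=
  ConsistentSet Ax Γ ∧ ∀ ψ, ψ ∈ Γ ∨ neg ψ ∈ Γ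

section Lindenbaum

variable {Ax Γ : Set Fml}

lemma consistentSet_sUnion {c : Set (Set Fml)} (hc : IsChain (· ⊆ ·) c) (hne : c.Nonempty)
    (hcons : ∀ Γ ∈ c, ConsistentSet Ax Γ) : ConsistentSet Ax (⋃₀ c) := fun l hl => by
  obtain ⟨Γ, hΓ, hlΓ⟩ :=
    DirectedOn.exists_mem_subset_of_finite_of_subset_sUnion hne hc.directedOn l.finite_toSet hl
  exact hcons Γ hΓ l hlΓ

-- The refutations of `ψ` and of `¬ψ` over `Γ` combine into a refutation of a list from `Γ`.
lemma ConsistentSet.insert_or_insert_neg (h : ConsistentSet Ax Γ) (ψ : Fml) :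
    ConsistentSet Ax (insert ψ Γ) ∨ ConsistentSet Ax (insert (neg ψ) Γ) := by
  classical
  simp only [or_iff_not_imp_left, ConsistentSet, not_forall, not_not]
  rintro ⟨l₁, hl₁, hp₁⟩ l₂ hl₂ hp₂
  refine h ((l₁ ++ l₂).filter (· ∈ Γ)) (fun χ hχ => of_decide_eq_true (List.mem_filter.1 hχ).2)
    (Prv.of_entails₂ (fun v h₁ h₂ => ?_) hp₁ hp₂)
  simp only [evalProp_neg, evalProp_bigAnd, List.mem_filter, List.mem_append,
    decide_eq_true_eq, Set.mem_insert_iff] at *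
  intro hall
  by_cases hψ : evalProp v ψ = true
  · exact h₁ fun χ hχ => (hl₁ χ hχ).elim (· ▸ hψ) fun hχΓ => hall χ ⟨.inl hχ, hχΓ⟩
  · refine h₂ fun χ hχ => (hl₂ χ hχ).elim (fun e => ?_) fun hχΓ => hall χ ⟨.inr hχ, hχΓ⟩
    simpa [e] using hψ

theorem ConsistentSet.exists_maximalConsistent_superset (h : ConsistentSet Ax Γ) :
    ∃ Δ, Γ ⊆ Δ ∧ MaximalConsistent Ax Δ := by
  obtain ⟨Δ, hΓΔ, hmax⟩ := zorn_subset_nonempty {Γ' | ConsistentSet Ax Γ'}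
    (fun c hcS hc hne => ⟨⋃₀ c, consistentSet_sUnion hc hne hcS,
      fun _ => Set.subset_sUnion_of_mem⟩) Γ h
  refine ⟨Δ, hΓΔ, hmax.prop, fun ψ => ?_⟩
  exact (hmax.prop.insert_or_insert_neg ψ).imp hmax.mem_of_prop_insert hmax.mem_of_prop_insert

lemma exists_maximalConsistent_neg_mem {φ : Fml} (h : ¬ Prv Ax φ) :
    ∃ Γ, MaximalConsistent Ax Γ ∧ neg φ ∈ Γ := by
  have hcons : ConsistentSet Ax {neg φ} := by
    refine fun l hl hp => h (Prv.of_entails (fun v hv => ?_) hp)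
    simp only [evalProp_neg, evalProp_bigAnd, not_forall] at hv
    obtain ⟨χ, hχ, hχv⟩ := hv
    by_contra hφ
    exact hχv (by rw [hl χ hχ]; simpa using hφ)
  obtain ⟨Γ, hsub, hΓ⟩ := hcons.exists_maximalConsistent_superset
  exact ⟨Γ, hΓ, hsub rfl⟩

end Lindenbaum

namespace MaximalConsistent

variable {Ax Γ : Set Fml} {A B ψ : Fml} {l : List Fml}

lemma mem_of_prv_imp_bigAnd (hΓ : MaximalConsistent Ax Γ) (hl : ∀ χ ∈ l, χ ∈ Γ)
    (h : Prv Ax (imp (bigAnd l) ψ)) : ψ ∈ Γ := by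
  refine (hΓ.2 ψ).resolve_right fun hψ => hΓ.1 (neg ψ :: l) ?_ (Prv.of_entails ?_ h)
  · simpa [hψ] using hl
  · intro v h
    simp only [evalProp_imp, evalProp_neg, evalProp_bigAnd, List.mem_cons,
      forall_eq_or_imp] at h ⊢
    tauto

lemma mem_of_entails (hΓ : MaximalConsistent Ax Γ) (hl : ∀ χ ∈ l, χ ∈ Γ)
    (h : ∀ v, (∀ χ ∈ l, evalProp v χ = true) → evalProp v ψ = true) : ψ ∈ Γ :=
  hΓ.mem_of_prv_imp_bigAnd hl (Prv.imp_of_entails fun v hv => h v ((evalProp_bigAnd l).1 hv))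

lemma mem_of_prv (hΓ : MaximalConsistent Ax Γ) (h : Prv Ax ψ) : ψ ∈ Γ :=
  hΓ.mem_of_prv_imp_bigAnd (l := []) (by simp)
    (Prv.of_entails (fun _ h => evalProp_imp.2 fun _ => h) h)

lemma mem_of_prv_imp (hΓ : MaximalConsistent Ax Γ) (h : Prv Ax (imp A B)) (hA : A ∈ Γ) : B ∈ Γ :=
  hΓ.mem_of_prv_imp_bigAnd (l := [A]) (by simpa using hA) h

lemma mem_of_imp_mem (hΓ : MaximalConsistent Ax Γ) (h : imp A B ∈ Γ) (hA : A ∈ Γ) : B ∈ Γ :=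
  hΓ.mem_of_entails (l := [imp A B, A]) (by simp [h, hA]) fun _ h => by simp_all

lemma neg_mem_iff (hΓ : MaximalConsistent Ax Γ) : neg ψ ∈ Γ ↔ ψ ∉ Γ := by
  refine ⟨fun hn hψ => hΓ.1 [ψ, neg ψ] (by simp [hψ, hn]) (Prv.taut fun _ => ?_),
    (hΓ.2 ψ).resolve_left⟩
  simp

lemma and_mem_iff (hΓ : MaximalConsistent Ax Γ) : Fml.and A B ∈ Γ ↔ A ∈ Γ ∧ B ∈ Γ :=
  ⟨fun h => ⟨hΓ.mem_of_entails (l := [Fml.and A B]) (by simpa using h) fun _ h => by simp_all,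
      hΓ.mem_of_entails (l := [Fml.and A B]) (by simpa using h) fun _ h => by simp_all⟩,
    fun h => hΓ.mem_of_entails (l := [A, B]) (by simpa using h) fun _ h => by simp_all⟩

lemma bigAnd_mem_iff (hΓ : MaximalConsistent Ax Γ) : bigAnd l ∈ Γ ↔ ∀ χ ∈ l, χ ∈ Γ :=
  ⟨fun h χ hχ => hΓ.mem_of_entails (l := [bigAnd l]) (by simpa using h) fun _ h => by simp_all,
    fun h => hΓ.mem_of_entails h fun _ h => by simpa using h⟩

-- The canonical existence lemma: the boxed members of `Γ` and `¬ψ` are jointly consistent.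
lemma exists_not_mem_of_box_not_mem (hΓ : MaximalConsistent Ax Γ) (h : box ψ ∉ Γ) :
    ∃ Δ, MaximalConsistent Ax Δ ∧ ψ ∉ Δ ∧ ∀ χ, box χ ∈ Γ → χ ∈ Δ := by
  classical
  have hcons : ConsistentSet Ax (insert (neg ψ) {χ | box χ ∈ Γ}) := by
    intro l hl hp
    set l' := l.filter (box · ∈ Γ)
    have hψ : Prv Ax (imp (bigAnd l') ψ) := by
      refine Prv.of_entails (fun v h => ?_) hp
      simp only [evalProp_neg, evalProp_imp, evalProp_bigAnd, l', List.mem_filter,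
        decide_eq_true_eq] at h ⊢
      intro hall
      by_contra hψ
      refine h fun χ hχ => ?_
      rcases hl χ hχ with rfl | hχΓ
      · simpa using hψ
      · exact hall χ ⟨hχ, hχΓ⟩
    refine h (hΓ.mem_of_prv_imp_bigAnd (l := l'.map box) (fun χ hχ => ?_)
      ((Prv.bigAnd_box_imp_box_bigAnd l').imp_trans (Prv.box_mono hψ)))
    obtain ⟨χ', hχ', rfl⟩ := List.mem_map.1 hχ
    exact of_decide_eq_true (List.mem_filter.1 hχ').2
  obtain ⟨Δ, hsub, hΔ⟩ := hcons.exists_maximalConsistent_superset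
  exact ⟨Δ, hΔ, hΔ.neg_mem_iff.1 (hsub (Set.mem_insert _ _)),
    fun χ hχ => hsub (Set.mem_insert_of_mem _ hχ)⟩

lemma box_mem_iff_of_forall_box_mem_imp {Δ : Set Fml} (hΓ : MaximalConsistent Ax Γ)
    (hΔ : MaximalConsistent Ax Δ) (h : ∀ χ, box χ ∈ Γ → χ ∈ Δ) (χ : Fml) :
    box χ ∈ Γ ↔ box χ ∈ Δ := by
  refine ⟨fun hχ => h _ (hΓ.mem_of_prv_imp (Prv.ax4 χ) hχ), fun hχ => ?_⟩
  by_contra hχΓ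
  have := h _ (hΓ.mem_of_prv_imp (Prv.neg_box_imp_box_neg_box χ) (hΓ.neg_mem_iff.2 hχΓ))
  exact hΔ.neg_mem_iff.1 this hχ

end MaximalConsistent

lemma exists_list_length_eq_mem_iff {α : Type*} [DecidableEq α] {l : List α} (hl : l ≠ [])
    {n : ℕ} (hn : l.toFinset.card ≤ n) : ∃ l' : List α, l'.length = n ∧ ∀ x, x ∈ l' ↔ x ∈ l := by
  refine ⟨l.dedup ++ List.replicate (n - l.dedup.length) (l.head hl), ?_, fun x => ?_⟩
  · rw [List.card_toFinset] at hn
    simp only [List.length_append, List.length_replicate]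
    omega
  · simp only [List.mem_append, List.mem_dedup, List.mem_replicate]
    exact ⟨fun h => h.elim id fun h => h.2 ▸ List.head_mem hl, .inl⟩

-- `Min_n` applied to a padding of `l` to length `n` by repetitions.
lemma MaximalConsistent.dia_bigAnd_Nf_mem {Ax Γ : Set Fml} {n : ℕ} (hΓ : MaximalConsistent Ax Γ)
    (hMin : MinAx n ⊆ Ax) {l : List ℕ} (hl : ∀ x ∈ l, 1 ≤ x ∧ x ≤ n)
    (hN : ∀ x ∈ l, dia (Nf x) ∈ Γ) : dia (bigAnd (l.map Nf)) ∈ Γ := by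
  rcases eq_or_ne l [] with rfl | hne
  · exact hΓ.mem_of_prv (Prv.mp (Prv.imp_dia _) (Prv.taut fun _ => by simp))
  have hcard : l.toFinset.card ≤ n := by
    simpa using Finset.card_le_card (t := Finset.Icc 1 n)
      fun x hx => Finset.mem_Icc.2 (hl x (List.mem_toFinset.1 hx))
  obtain ⟨l', hlen, hmem⟩ := exists_list_length_eq_mem_iff hne hcard
  have hdia := hΓ.mem_of_imp_mem (hΓ.mem_of_prv (Prv.axm (hMin ⟨l', hlen, rfl⟩)))
    (hΓ.bigAnd_mem_iff.2 (by simpa [hmem] using hN))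
  exact hΓ.mem_of_prv_imp (Prv.dia_mono (Prv.bigAnd_imp_bigAnd (by simp [List.subset_def, hmem])))
    hdia

-- Fixing the boxed formulas makes every world see every other, as `□` in `Sat` requires.
structure CanonicalWorld (Ax Γ₀ : Set Fml) where
  carrier : Set Fml
  mcs : MaximalConsistent Ax carrier
  box_mem_iff : ∀ χ, box χ ∈ Γ₀ ↔ box χ ∈ carrier

-- Variables other than `x_1, …, x_n` are `N` everywhere, so that `Min_n` suffices for `MinC`.
def canonicalV1 (Ax Γ₀ : Set Fml) (n : ℕ) (x : ℕ) : Set (CanonicalWorld Ax Γ₀) :=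
  {Δ | (1 ≤ x ∧ x ≤ n) ∧ tt x ∈ Δ.carrier}

def canonicalV2 (Ax Γ₀ : Set Fml) (n : ℕ) (x : ℕ) : Set (CanonicalWorld Ax Γ₀) :=
  {Δ | (1 ≤ x ∧ x ≤ n) ∧ ff x ∈ Δ.carrier}

namespace CanonicalWorld

variable {Ax Γ₀ : Set Fml} {n : ℕ} {ψ : Fml}

def root (hΓ₀ : MaximalConsistent Ax Γ₀) : CanonicalWorld Ax Γ₀ := ⟨Γ₀, hΓ₀, fun _ => Iff.rfl⟩

lemma exists_not_mem_of_box_not_mem (hΓ₀ : MaximalConsistent Ax Γ₀) (h : box ψ ∉ Γ₀) :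
    ∃ Δ : CanonicalWorld Ax Γ₀, ψ ∉ Δ.carrier := by
  obtain ⟨Δ, hΔ, hψ, hbox⟩ := hΓ₀.exists_not_mem_of_box_not_mem h
  exact ⟨⟨Δ, hΔ, hΓ₀.box_mem_iff_of_forall_box_mem_imp hΔ hbox⟩, hψ⟩

lemma exists_mem_of_dia_mem (hΓ₀ : MaximalConsistent Ax Γ₀) (h : dia ψ ∈ Γ₀) :
    ∃ Δ : CanonicalWorld Ax Γ₀, ψ ∈ Δ.carrier := by
  obtain ⟨Δ, hΔ⟩ := exists_not_mem_of_box_not_mem hΓ₀ (hΓ₀.neg_mem_iff.1 h)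
  exact ⟨Δ, (Δ.mcs.2 ψ).resolve_right hΔ⟩

lemma dia_mem_of_mem (hΓ₀ : MaximalConsistent Ax Γ₀) (Δ : CanonicalWorld Ax Γ₀)
    (h : ψ ∈ Δ.carrier) : dia ψ ∈ Γ₀ :=
  hΓ₀.neg_mem_iff.2 fun hbox =>
    Δ.mcs.neg_mem_iff.1 (Δ.mcs.mem_of_prv_imp (Prv.axT _) ((Δ.box_mem_iff _).1 hbox)) h

theorem sat_iff_mem (hΓ₀ : MaximalConsistent Ax Γ₀) (hψ : IsNFormula n ψ)
    (Δ : CanonicalWorld Ax Γ₀) :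
    Sat (canonicalV1 Ax Γ₀ n) (canonicalV2 Ax Γ₀ n) Δ ψ ↔ ψ ∈ Δ.carrier := by
  induction ψ generalizing Δ with
  | tt x => exact and_iff_right (hψ rfl)
  | ff x => exact and_iff_right (hψ rfl)
  | neg φ ih => rw [sat_neg, ih hψ, Δ.mcs.neg_mem_iff]
  | and φ χ ih₁ ih₂ =>
    rw [sat_and, ih₁ (fun x hx => hψ (.inl hx)), ih₂ (fun x hx => hψ (.inr hx)), Δ.mcs.and_mem_iff]
  | box φ ih =>
    refine ⟨fun h => by_contra fun hφ => ?_, fun h Δ' => (ih hψ Δ').2 ?_⟩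
    · obtain ⟨Δ', hΔ'⟩ := exists_not_mem_of_box_not_mem hΓ₀ fun h₀ => hφ ((Δ.box_mem_iff φ).1 h₀)
      exact hΔ' ((ih hψ Δ').1 (h Δ'))
    · exact Δ'.mcs.mem_of_prv_imp (Prv.axT φ) ((Δ'.box_mem_iff φ).1 ((Δ.box_mem_iff φ).2 h))

lemma mem_compl_iff_Nf_mem (hΓ₀ : MaximalConsistent Ax Γ₀) {x : ℕ} (hx : 1 ≤ x ∧ x ≤ n)
    (Δ : CanonicalWorld Ax Γ₀) :
    Δ ∈ (canonicalV1 Ax Γ₀ n x ∪ canonicalV2 Ax Γ₀ n x)ᶜ ↔ Nf x ∈ Δ.carrier :=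
  (sat_Nf x).symm.trans (sat_iff_mem hΓ₀ (by simpa [IsNFormula, vars, Fml.Nf] using hx) Δ)

lemma conC (hCon : ConAx ⊆ Ax) : ConC (canonicalV1 Ax Γ₀ n) (canonicalV2 Ax Γ₀ n) := by
  refine fun x => Set.eq_empty_of_forall_notMem fun Δ ⟨⟨_, h₁⟩, ⟨_, h₂⟩⟩ => ?_
  exact Δ.mcs.neg_mem_iff.1 (Δ.mcs.mem_of_prv (Prv.axm (hCon ⟨x, rfl⟩)))
    (Δ.mcs.and_mem_iff.2 ⟨h₁, h₂⟩)

lemma groundC (hΓ₀ : MaximalConsistent Ax Γ₀) (hG : GroundAx ⊆ Ax) :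
    GroundC (canonicalV1 Ax Γ₀ n) (canonicalV2 Ax Γ₀ n) := by
  rintro x ⟨Δ₁, hx, h₁⟩ ⟨Δ₂, -, h₂⟩
  have hN : dia (Nf x) ∈ Γ₀ := hΓ₀.mem_of_imp_mem (hΓ₀.mem_of_prv (Prv.axm (hG ⟨x, rfl⟩)))
    (hΓ₀.and_mem_iff.2 ⟨dia_mem_of_mem hΓ₀ Δ₁ h₁, dia_mem_of_mem hΓ₀ Δ₂ h₂⟩)
  obtain ⟨Δ, hΔ⟩ := exists_mem_of_dia_mem hΓ₀ hN
  exact ⟨Δ, (mem_compl_iff_Nf_mem hΓ₀ hx Δ).2 hΔ⟩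

lemma minC (hΓ₀ : MaximalConsistent Ax Γ₀) (hMin : MinAx n ⊆ Ax) :
    MinC (canonicalV1 Ax Γ₀ n) (canonicalV2 Ax Γ₀ n) := by
  intro l _ hl
  set l' := l.filter fun x => 1 ≤ x ∧ x ≤ n
  have hl' : ∀ x, x ∈ l' ↔ x ∈ l ∧ 1 ≤ x ∧ x ≤ n := by simp [l']
  have hN : ∀ x ∈ l', dia (Nf x) ∈ Γ₀ := fun x hx => by
    obtain ⟨hxl, hx⟩ := (hl' x).1 hx
    obtain ⟨Δ, hΔ⟩ := hl x hxl
    exact dia_mem_of_mem hΓ₀ Δ ((mem_compl_iff_Nf_mem hΓ₀ hx Δ).1 hΔ)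
  obtain ⟨Δ, hΔ⟩ := exists_mem_of_dia_mem hΓ₀
    (hΓ₀.dia_bigAnd_Nf_mem hMin (fun x hx => ((hl' x).1 hx).2) hN)
  refine ⟨Δ, Set.mem_iInter₂.2 fun x hxl => ?_⟩
  by_cases hx : 1 ≤ x ∧ x ≤ n
  · exact (mem_compl_iff_Nf_mem hΓ₀ hx Δ).2
      (Δ.mcs.bigAnd_mem_iff.1 hΔ _ (List.mem_map_of_mem ((hl' x).2 ⟨hxl, hx⟩)))
  · simp [canonicalV1, canonicalV2, hx]

end CanonicalWorld

open CanonicalWorld in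
theorem prv_of_forall_sat {Ax : Set Fml} {n : ℕ} {φ : Fml} (hCon : ConAx ⊆ Ax)
    (hG : GroundAx ⊆ Ax) (hMin : MinAx n ⊆ Ax) (hφ : IsNFormula n φ)
    (h : ∀ (W : Type) (V1 V2 : ℕ → Set W), ConC V1 V2 → GroundC V1 V2 →
      MinC V1 V2 → ∀ w : W, Sat V1 V2 w φ) :
    Prv Ax φ := by
  by_contra hnp
  obtain ⟨Γ₀, hΓ₀, hneg⟩ := exists_maximalConsistent_neg_mem hnp
  have hsat := h _ _ _ (conC hCon) (groundC hΓ₀ hG) (minC hΓ₀ hMin) (root hΓ₀)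
  exact hΓ₀.neg_mem_iff.1 hneg ((sat_iff_mem hΓ₀ hφ _).1 hsat)

theorem completeness_n_variables_general (n : ℕ) (φ : Fml)
    (hφ : IsNFormula n φ) :
    (∀ (W : Type) (V1 V2 : ℕ → Set W), ConC V1 V2 → GroundC V1 V2 →
        MinC V1 V2 → ∀ w : W, Sat V1 V2 w φ) ↔
      Prv (ConAx ∪ GroundAx ∪ MinAx n) φ := by
  refine ⟨prv_of_forall_sat (fun _ h => .inl (.inl h)) (fun _ h => .inl (.inr h))
    (fun _ h => .inr h) hφ, fun hp W V1 V2 hC hG hM => hp.sound ?_⟩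
  rintro ψ ((h | h) | h)
  exacts [hC.sat_of_mem_conAx ψ h, hG.sat_of_mem_groundAx ψ h, hM.sat_of_mem_minAx ψ h]

/-- soundness and completeness of S5[Con,Ground,Min_n] for
n-formulas with respect to models satisfying the Con, Ground, and Min
constraints. -/
theorem completeness_n_variables (n : ℕ) (hn : 1 ≤ n) (φ : Fml)
    (hφ : IsNFormula n φ) :
    (∀ (W : Type) (V1 V2 : ℕ → Set W), ConC V1 V2 → GroundC V1 V2 →
        MinC V1 V2 → ∀ w : W, Sat V1 V2 w φ) ↔
      Prv (ConAx ∪ GroundAx ∪ MinAx n) φ :=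
  completeness_n_variables_general n φ hφ

end KripkeModal
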